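/- Let p ∈ (0,1], q = 1-p, and let G be the random bipartite graph on {1,…,n} × {1,…,n} where each of the n² possible edges is present independently with probability p. Then the probability that the unique stable matching of G is a perfect matching equals ∏_{k=1}^{n} (1 - q^k). -/

import Mathlib

/-!
In a stable perfect matching the top male must be matched to his best compatible female
(otherwise the two would block), and removing this pair leaves a stable perfect matching of the
others; conversely such a pair can always be added back. So a stable perfect matching exists
exactly when the greedy procedure matches everybody. Male `n` has a compatible female with
probability `1 - q ^ n`. Which female he takes depends only on his own edges, while whether the
remaining males succeed with the remaining `n - 1` females depends only on theirs and, by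
induction, has probability `∏_{k<n} (1 - q ^ k)` whichever female he took.
-/

open MeasureTheory ProbabilityTheory

/-- `M` is a matching of the bipartite compatibility graph with male set `A`,
female set `B`, and compatibility relation `E`. -/
def IsBipMatching (E : ℤ → ℤ → Prop) (A B : Finset ℤ) (M : Finset (ℤ × ℤ)) : Prop :=
  (∀ e ∈ M, e.1 ∈ A ∧ e.2 ∈ B ∧ E e.1 e.2) ∧
  (∀ e ∈ M, ∀ f ∈ M, e.1 = f.1 → e = f) ∧
  (∀ e ∈ M, ∀ f ∈ M, e.2 = f.2 → e = f)

/-- Stability of a matching. -/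
def IsStableBipMatching (E : ℤ → ℤ → Prop) (A B : Finset ℤ) (M : Finset (ℤ × ℤ)) : Prop :=
  IsBipMatching E A B M ∧
  ¬ ∃ i ∈ A, ∃ j ∈ B, E i j ∧ (∀ j', (i, j') ∈ M → j' < j) ∧ (∀ i', (i', j) ∈ M → i' < i)

/-- A matching is perfect if every male in `A` and every female in `B` is matched. -/
def IsPerfectBipMatching (A B : Finset ℤ) (M : Finset (ℤ × ℤ)) : Prop :=
  (∀ i ∈ A, ∃ j, (i, j) ∈ M) ∧ (∀ j ∈ B, ∃ i, (i, j) ∈ M)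

open Finset

def IsBestPartner (E : ℤ → ℤ → Prop) (i : ℤ) (B : Finset ℤ) (j : ℤ) : Prop :=
  j ∈ B ∧ E i j ∧ ∀ j' ∈ B, E i j' → j' ≤ j

/-- The greedy procedure, in which males `m, m - 1, …, 1` in turn take their best partner among
the females of `B` still unmatched, matches everybody. -/
def GreedySucceeds (E : ℤ → ℤ → Prop) : ℕ → Finset ℤ → Prop
  | 0, B => B = ∅
  | m + 1, B => ∃ j, IsBestPartner E (m + 1) B j ∧ GreedySucceeds E m (B.erase j)

def HasStablePerfectMatching (E : ℤ → ℤ → Prop) (A B : Finset ℤ) : Prop :=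
  ∃ M, IsStableBipMatching E A B M ∧ IsPerfectBipMatching A B M

section StableMatching

variable {E E' : ℤ → ℤ → Prop} {A B : Finset ℤ} {M : Finset (ℤ × ℤ)} {i j : ℤ}

lemma IsBestPartner.unique {j' : ℤ} (h : IsBestPartner E i B j) (h' : IsBestPartner E i B j') :
    j = j' :=
  le_antisymm (h'.2.2 j h.1 h.2.1) (h.2.2 j' h'.1 h'.2.1)

lemma exists_isBestPartner_iff : (∃ j, IsBestPartner E i B j) ↔ ∃ j ∈ B, E i j := by
  classical
  refine ⟨fun ⟨j, hjB, hE, _⟩ => ⟨j, hjB, hE⟩, fun ⟨j, hjB, hE⟩ => ?_⟩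
  obtain ⟨j₀, hj₀, hmax⟩ := (B.filter (E i)).exists_max_image id ⟨j, mem_filter.2 ⟨hjB, hE⟩⟩
  exact ⟨j₀, (mem_filter.1 hj₀).1, (mem_filter.1 hj₀).2,
    fun j' hj' hE' => hmax j' (mem_filter.2 ⟨hj', hE'⟩)⟩

lemma isBestPartner_congr (h : ∀ j ∈ B, E i j ↔ E' i j) :
    IsBestPartner E i B j ↔ IsBestPartner E' i B j := by
  refine and_congr_right fun hj => and_congr (h j hj) (forall₂_congr fun j' hj' => ?_)
  rw [h j' hj']

lemma greedySucceeds_congr {m : ℕ} (h : ∀ i ∈ Icc 1 (m : ℤ), ∀ j ∈ B, E i j ↔ E' i j) :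
    GreedySucceeds E m B ↔ GreedySucceeds E' m B := by
  induction m generalizing B with
  | zero => rfl
  | succ m ih =>
    refine exists_congr fun j => and_congr (isBestPartner_congr (h _ (by simp))) (ih ?_)
    intro i hi j' hj'
    exact h i (by simp only [mem_Icc] at hi ⊢; omega) j' (mem_of_mem_erase hj')

namespace IsBipMatching

lemma erase (hM : IsBipMatching E A B M) (hij : (i, j) ∈ M) :
    IsBipMatching E (A.erase i) (B.erase j) (M.erase (i, j)) := by
  refine ⟨fun e he => ?_, fun e he f hf => hM.2.1 e (mem_of_mem_erase he) f (mem_of_mem_erase hf),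
    fun e he f hf => hM.2.2 e (mem_of_mem_erase he) f (mem_of_mem_erase hf)⟩
  obtain ⟨hne, heM⟩ := mem_erase.1 he
  obtain ⟨hA, hB, hE⟩ := hM.1 e heM
  exact ⟨mem_erase.2 ⟨fun h => hne (hM.2.1 e heM _ hij h), hA⟩,
    mem_erase.2 ⟨fun h => hne (hM.2.2 e heM _ hij h), hB⟩, hE⟩

lemma insert (hM : IsBipMatching E A B M) (hi : i ∉ A) (hj : j ∉ B) (hE : E i j) :
    IsBipMatching E (insert i A) (insert j B) (insert (i, j) M) := by
  refine ⟨fun e he => ?_, fun e he f hf hef => ?_, fun e he f hf hef => ?_⟩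
  · rcases mem_insert.1 he with rfl | heM
    · exact ⟨mem_insert_self _ _, mem_insert_self _ _, hE⟩
    · obtain ⟨hA, hB, hE⟩ := hM.1 e heM
      exact ⟨mem_insert_of_mem hA, mem_insert_of_mem hB, hE⟩
  all_goals
    rcases mem_insert.1 he with rfl | heM <;> rcases mem_insert.1 hf with rfl | hfM
    · rfl
    · exact absurd (hef ▸ (hM.1 f hfM)) (by simp [hi, hj])
    · exact absurd (hef.symm ▸ (hM.1 e heM)) (by simp [hi, hj])
    · first | exact hM.2.1 e heM f hfM hef | exact hM.2.2 e heM f hfM hef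

end IsBipMatching

namespace IsStableBipMatching

lemma erase (hM : IsStableBipMatching E A B M) (hij : (i, j) ∈ M) :
    IsStableBipMatching E (A.erase i) (B.erase j) (M.erase (i, j)) := by
  refine ⟨hM.1.erase hij, fun ⟨a, ha, b, hb, hE, ha', hb'⟩ => hM.2 ⟨a, mem_of_mem_erase ha, b,
    mem_of_mem_erase hb, hE, fun j' h => ha' j' (mem_erase.2 ⟨?_, h⟩),
    fun i' h => hb' i' (mem_erase.2 ⟨?_, h⟩)⟩⟩
  · exact fun h => ne_of_mem_erase ha (congrArg Prod.fst h)
  · exact fun h => ne_of_mem_erase hb (congrArg Prod.snd h)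

/-- Otherwise the top male and his best partner would form a blocking pair. -/
lemma isBestPartner (hM : IsStableBipMatching E A B M) (hA : ∀ a ∈ A, a ≤ i)
    (hij : (i, j) ∈ M) : IsBestPartner E i B j := by
  obtain ⟨hi, hj, hE⟩ := hM.1.1 _ hij
  have partner_eq : ∀ {j'}, (i, j') ∈ M → j' = j := fun h =>
    congrArg Prod.snd (hM.1.2.1 _ h _ hij rfl)
  refine ⟨hj, hE, fun j' hj' hE' => not_lt.1 fun hlt => hM.2 ⟨i, hi, j', hj', hE',
    fun j'' h => partner_eq h ▸ hlt, fun i' h => lt_of_le_of_ne (hA i' (hM.1.1 _ h).1) ?_⟩⟩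
  rintro rfl
  exact hlt.ne' (partner_eq h)

lemma insert (hM : IsStableBipMatching E A (B.erase j) M) (hA : ∀ a ∈ A, a < i)
    (hbest : IsBestPartner E i B j) : IsStableBipMatching E (insert i A) B (insert (i, j) M) := by
  have hi : i ∉ A := fun h => lt_irrefl i (hA i h)
  refine ⟨insert_erase hbest.1 ▸ hM.1.insert hi (notMem_erase j B) hbest.2.1, ?_⟩
  rintro ⟨a, ha, b, hb, hE, ha', hb'⟩
  by_cases hai : a = i
  · subst hai
    exact (ha' j (mem_insert_self _ _)).not_ge (hbest.2.2 b hb hE)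
  have haA : a ∈ A := (mem_insert.1 ha).resolve_left hai
  by_cases hbj : b = j
  · subst hbj
    exact (hb' i (mem_insert_self _ _)).not_gt (hA a haA)
  exact hM.2 ⟨a, haA, b, mem_erase.2 ⟨hbj, hb⟩, hE, fun j' h => ha' j' (mem_insert_of_mem h),
    fun i' h => hb' i' (mem_insert_of_mem h)⟩

end IsStableBipMatching

namespace IsPerfectBipMatching

lemma erase (hM : IsPerfectBipMatching A B M) :
    IsPerfectBipMatching (A.erase i) (B.erase j) (M.erase (i, j)) := by
  refine ⟨fun a ha => ?_, fun b hb => ?_⟩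
  · obtain ⟨b, hab⟩ := hM.1 a (mem_of_mem_erase ha)
    exact ⟨b, mem_erase.2 ⟨fun h => ne_of_mem_erase ha (congrArg Prod.fst h), hab⟩⟩
  · obtain ⟨a, hab⟩ := hM.2 b (mem_of_mem_erase hb)
    exact ⟨a, mem_erase.2 ⟨fun h => ne_of_mem_erase hb (congrArg Prod.snd h), hab⟩⟩

lemma insert (hM : IsPerfectBipMatching A B M) :
    IsPerfectBipMatching (insert i A) (insert j B) (insert (i, j) M) := by
  refine ⟨fun a ha => ?_, fun b hb => ?_⟩
  · rcases mem_insert.1 ha with rfl | ha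
    · exact ⟨j, mem_insert_self _ _⟩
    · obtain ⟨b, hab⟩ := hM.1 a ha
      exact ⟨b, mem_insert_of_mem hab⟩
  · rcases mem_insert.1 hb with rfl | hb
    · exact ⟨i, mem_insert_self _ _⟩
    · obtain ⟨a, hab⟩ := hM.2 b hb
      exact ⟨a, mem_insert_of_mem hab⟩

end IsPerfectBipMatching

lemma hasStablePerfectMatching_empty_iff : HasStablePerfectMatching E ∅ B ↔ B = ∅ := by
  refine ⟨fun ⟨M, hM, hP⟩ => eq_empty_of_forall_notMem fun j hj => ?_, ?_⟩
  · obtain ⟨i, hij⟩ := hP.2 j hj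
    exact notMem_empty i (hM.1.1 _ hij).1
  · rintro rfl
    exact ⟨∅, ⟨⟨by simp, by simp, by simp⟩, by simp⟩, by simp, by simp⟩

lemma hasStablePerfectMatching_insert_iff (hA : ∀ a ∈ A, a < i) :
    HasStablePerfectMatching E (insert i A) B ↔
      ∃ j, IsBestPartner E i B j ∧ HasStablePerfectMatching E A (B.erase j) := by
  have hi : i ∉ A := fun h => lt_irrefl i (hA i h)
  constructor
  · rintro ⟨M, hM, hP⟩
    obtain ⟨j, hij⟩ := hP.1 i (mem_insert_self i A)
    refine ⟨j, hM.isBestPartner (fun a ha => ?_) hij, M.erase (i, j), ?_, ?_⟩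
    · rcases mem_insert.1 ha with rfl | ha
      exacts [le_rfl, (hA a ha).le]
    · simpa only [erase_insert hi] using hM.erase hij
    · simpa only [erase_insert hi] using hP.erase (i := i) (j := j)
  · rintro ⟨j, hbest, M, hM, hP⟩
    exact ⟨insert (i, j) M, hM.insert hA hbest, insert_erase hbest.1 ▸ hP.insert⟩

lemma hasStablePerfectMatching_Icc_iff_greedySucceeds (m : ℕ) (B : Finset ℤ) :
    HasStablePerfectMatching E (Icc 1 (m : ℤ)) B ↔ GreedySucceeds E m B := by
  induction m generalizing B with
  | zero => simpa [GreedySucceeds] using hasStablePerfectMatching_empty_iff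
  | succ m ih =>
    rw [Nat.cast_succ, ← insert_Icc_right_eq_Icc_add_one (by omega),
      hasStablePerfectMatching_insert_iff (fun a ha => by simp only [mem_Icc] at ha; omega)]
    exact exists_congr fun j => and_congr_right fun _ => ih _

end StableMatching

section Independence

variable {Ω ι β : Type*}

def IsDeterminedBy (X : ι → Ω → β) (T : Finset ι) (s : Set Ω) : Prop :=
  ∀ ω ω', (∀ i ∈ T, X i ω = X i ω') → ω ∈ s → ω' ∈ s

variable {X : ι → Ω → β}

lemma IsDeterminedBy.eq_preimage_image {T : Finset ι} {s : Set Ω} (h : IsDeterminedBy X T s) :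
    s = (fun ω (i : T) => X i ω) ⁻¹' ((fun ω (i : T) => X i ω) '' s) :=
  (Set.subset_preimage_image _ _).antisymm fun _ ⟨ω', hω', heq⟩ =>
    h ω' _ (fun i hi => congrFun heq ⟨i, hi⟩) hω'

variable [MeasurableSpace Ω] [MeasurableSpace β] [DiscreteMeasurableSpace β] [Countable β]
  {μ : Measure Ω}

lemma IsDeterminedBy.measurableSet (hmeas : ∀ i, Measurable (X i)) {T : Finset ι} {s : Set Ω}
    (h : IsDeterminedBy X T s) : MeasurableSet s := by
  rw [h.eq_preimage_image]
  exact (measurable_pi_lambda (fun ω (i : T) => X i ω) fun i => hmeas i) .of_discrete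

lemma ProbabilityTheory.iIndepFun.measure_inter_eq_mul_of_isDeterminedBy (hind : iIndepFun X μ)
    (hmeas : ∀ i, Measurable (X i)) {S T : Finset ι} (hST : Disjoint S T) {s t : Set Ω}
    (hs : IsDeterminedBy X S s) (ht : IsDeterminedBy X T t) : μ (s ∩ t) = μ s * μ t := by
  rw [hs.eq_preimage_image, ht.eq_preimage_image]
  exact (hind.indepFun_finset S T hST hmeas).measure_inter_preimage_eq_mul _ _ .of_discrete
    .of_discrete

end Independence

lemma ProbabilityTheory.iIndepFun.measure_exists_eq_true {Ω ι : Type*} [MeasurableSpace Ω]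
    {μ : Measure Ω} [IsProbabilityMeasure μ] {X : ι → Ω → Bool} (hind : iIndepFun X μ)
    (hmeas : ∀ i, Measurable (X i)) (S : Finset ι) :
    μ {ω | ∃ i ∈ S, X i ω = true} = 1 - ∏ i ∈ S, μ {ω | X i ω = false} := by
  have hcompl : {ω | ∃ i ∈ S, X i ω = true} = (⋂ i ∈ S, X i ⁻¹' {false})ᶜ := by
    ext ω
    simp
  rw [hcompl, prob_compl_eq_one_sub (S.measurableSet_biInter fun i _ => hmeas i .of_discrete),
    hind.measure_inter_preimage_eq_mul S fun _ _ => .of_discrete]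
  rfl

section RandomGraph

variable {Ω : Type*} {C : ℤ × ℤ → Ω → Bool}

lemma isDeterminedBy_isBestPartner (i : ℤ) (B : Finset ℤ) (j : ℤ) :
    IsDeterminedBy C ({i} ×ˢ B) {ω | IsBestPartner (fun i j => C (i, j) ω = true) i B j} :=
  fun ω ω' h => by
    simp only [Set.mem_ofPred_eq]
    refine (isBestPartner_congr fun j hj => ?_).1
    rw [h (i, j) (by simp [hj])]

lemma isDeterminedBy_greedySucceeds (m : ℕ) (B : Finset ℤ) :
    IsDeterminedBy C (Icc 1 (m : ℤ) ×ˢ B)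
      {ω | GreedySucceeds (fun i j => C (i, j) ω = true) m B} :=
  fun ω ω' h => by
    simp only [Set.mem_ofPred_eq]
    refine (greedySucceeds_congr fun i hi j hj => ?_).1
    rw [h (i, j) (mem_product.2 ⟨hi, hj⟩)]

variable [MeasurableSpace Ω] {μ : Measure Ω}

/-- Male `m + 1`'s choice of partner depends only on his own edges, which are independent of the
edges of males `1, …, m` deciding whether the greedy procedure goes on to succeed. -/
lemma measure_greedySucceeds_succ (hind : iIndepFun C μ) (hmeas : ∀ e, Measurable (C e))
    (m : ℕ) (B : Finset ℤ) {c : ENNReal}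
    (hc : ∀ j ∈ B, μ {ω | GreedySucceeds (fun i j => C (i, j) ω = true) m (B.erase j)} = c) :
    μ {ω | GreedySucceeds (fun i j => C (i, j) ω = true) (m + 1) B} =
      μ {ω | ∃ j ∈ B, C ((m : ℤ) + 1, j) ω = true} * c := by
  set best := fun j => {ω | IsBestPartner (fun i j => C (i, j) ω = true) ((m : ℤ) + 1) B j}
  set rest := fun j => {ω | GreedySucceeds (fun i j => C (i, j) ω = true) m (B.erase j)}
  have hdisj : Disjoint ({(m : ℤ) + 1} ×ˢ B) (Icc 1 (m : ℤ) ×ˢ B) :=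
    disjoint_product.2 (Or.inl (by simp))
  have hbest_disj : (B : Set ℤ).PairwiseDisjoint best := fun j _ j' _ hne =>
    Set.disjoint_left.2 fun _ h h' =>
      hne (IsBestPartner.unique (E := fun i j => C (i, j) _ = true) h h')
  have hbest_meas : ∀ j ∈ B, MeasurableSet (best j) := fun j _ =>
    (isDeterminedBy_isBestPartner _ B j).measurableSet hmeas
  calc μ {ω | GreedySucceeds (fun i j => C (i, j) ω = true) (m + 1) B}
      = μ (⋃ j ∈ B, best j ∩ rest j) := by
        congr 1
        ext ω
        simp only [GreedySucceeds, Set.mem_iUnion, Set.mem_inter_iff, best, rest,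
          Set.mem_ofPred_eq, exists_prop]
        exact exists_congr fun j => ⟨fun h => ⟨h.1.1, h⟩, fun h => h.2⟩
    _ = ∑ j ∈ B, μ (best j) * c := by
        rw [measure_biUnion_finset (hbest_disj.mono fun j => Set.inter_subset_left)
          fun j hj => (hbest_meas j hj).inter
            ((isDeterminedBy_greedySucceeds m _).measurableSet hmeas)]
        refine sum_congr rfl fun j hj => ?_
        rw [hind.measure_inter_eq_mul_of_isDeterminedBy hmeas hdisj
          (isDeterminedBy_isBestPartner _ B j)
          (fun ω ω' h => isDeterminedBy_greedySucceeds m (B.erase j) ω ω'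
            fun e he => h e (product_subset_product_right (erase_subset j B) he)), hc j hj]
    _ = μ {ω | ∃ j ∈ B, C ((m : ℤ) + 1, j) ω = true} * c := by
        rw [← sum_mul, ← measure_biUnion_finset hbest_disj hbest_meas]
        congr 2
        ext ω
        simp only [Set.mem_iUnion, best, Set.mem_ofPred_eq, exists_prop]
        exact (exists_congr fun j => ⟨fun h => h.2, fun h => ⟨h.1, h⟩⟩).trans
          exists_isBestPartner_iff

lemma measure_greedySucceeds [IsProbabilityMeasure μ] (hind : iIndepFun C μ)
    (hmeas : ∀ e, Measurable (C e)) {q : ℝ} (hq0 : 0 ≤ q) (hq1 : q ≤ 1)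
    (hfalse : ∀ e, μ {ω | C e ω = false} = ENNReal.ofReal q) (m : ℕ) (B : Finset ℤ)
    (hB : #B = m) :
    μ {ω | GreedySucceeds (fun i j => C (i, j) ω = true) m B} =
      ENNReal.ofReal (∏ k ∈ Icc 1 m, (1 - q ^ k)) := by
  induction m generalizing B with
  | zero =>
    obtain rfl := card_eq_zero.1 hB
    simp [GreedySucceeds]
  | succ m ih =>
    have hrow : {ω | ∃ j ∈ B, C ((m : ℤ) + 1, j) ω = true} =
        {ω | ∃ e ∈ {(m : ℤ) + 1} ×ˢ B, C e ω = true} := by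
      ext ω
      simp
    rw [measure_greedySucceeds_succ hind hmeas m B fun j hj =>
        ih _ (by rw [card_erase_of_mem hj, hB]; rfl),
      hrow, hind.measure_exists_eq_true hmeas, prod_congr rfl fun e _ => hfalse e, prod_const,
      card_product, card_singleton, one_mul, hB, ← ENNReal.ofReal_pow hq0, ← ENNReal.ofReal_one,
      ← ENNReal.ofReal_sub _ (pow_nonneg hq0 _),
      ← ENNReal.ofReal_mul (sub_nonneg.2 (pow_le_one₀ hq0 hq1)), prod_Icc_succ_top (by omega),
      mul_comm]

end RandomGraph

/-- For the random bipartite graph on `{1,…,n} × {1,…,n}` in which each edge is present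
independently with probability `p`, the probability that the (unique) stable matching is
perfect equals `∏_{k=1}^n (1 - q^k)` where `q = 1 - p`. -/
theorem prob_stable_matching_perfect
    {Ω : Type*} [MeasurableSpace Ω] (μ : Measure Ω) [IsProbabilityMeasure μ]
    (p q : ℝ) (hp0 : 0 < p) (hp1 : p ≤ 1) (hq : q = 1 - p) (n : ℕ)
    (C : ℤ × ℤ → Ω → Bool) (hmeas : ∀ e, Measurable (C e))
    (hind : iIndepFun C μ)
    (hBer : ∀ e, μ {ω | C e ω = true} = ENNReal.ofReal p) :
    μ {ω | ∃ M : Finset (ℤ × ℤ),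
        IsStableBipMatching (fun i j => C (i, j) ω = true)
          (Finset.Icc 1 (n : ℤ)) (Finset.Icc 1 (n : ℤ)) M ∧
        IsPerfectBipMatching (Finset.Icc 1 (n : ℤ)) (Finset.Icc 1 (n : ℤ)) M}
      = ENNReal.ofReal (∏ k ∈ Finset.Icc 1 n, (1 - q ^ k)) := by
  have hfalse : ∀ e, μ {ω | C e ω = false} = ENNReal.ofReal q := fun e => by
    have hcompl : {ω | C e ω = false} = {ω | C e ω = true}ᶜ := by
      ext ω
      simp
    rw [hcompl, prob_compl_eq_one_sub (s := {ω | C e ω = true}) (hmeas e (.singleton true)),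
      hBer, hq, ENNReal.ofReal_sub _ hp0.le, ENNReal.ofReal_one]
  convert measure_greedySucceeds hind hmeas (by linarith) (by linarith) hfalse n (Icc 1 (n : ℤ))
    (by simp) using 2
  exact Set.ext fun ω => hasStablePerfectMatching_Icc_iff_greedySucceeds n _
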